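/- arXiv:1501.05985 — 2 statements merged into one kernel-verified Lean document; each statement's English description precedes it below -/
import Mathlib

section
/- For every f in S² = { f holomorphic on D : f' ∈ H² }, one has the sup-norm bound ‖f‖_∞ ≤ 2‖f‖_{S²}, where ‖f‖²_{S²} = ‖f'‖²_{H²} + ‖f‖²_{H²}. -/
/-!
Cauchy–Schwarz with the weights `1 + n²`: for `|z| < 1`,
`|Σ aₙ zⁿ| ≤ Σ |aₙ| ≤ (Σ (1 + n²) |aₙ|²)^{1/2} (Σ (1 + n²)⁻¹)^{1/2}`.
The first factor is `‖f‖_{S²}`, because `f'` has coefficients `(n + 1) aₙ₊₁`; since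
`(n + 1)² ≤ 2 (1 + n²)`, the second is at most `(2 ζ(2))^{1/2} = π / √3 < 2`.
-/

open scoped BigOperators

/-- The `H²` norm of a Taylor-coefficient sequence: `√(Σ |aₙ|²)`. -/
noncomputable def h2norm (a : ℕ → ℂ) : ℝ := Real.sqrt (∑' n, ‖a n‖ ^ 2)

/-- Membership in the Hardy space `H²`: square-summable Taylor coefficients. -/
def memH2 (a : ℕ → ℂ) : Prop := Summable fun n => ‖a n‖ ^ 2

/-- Taylor coefficients of the derivative: if `f = Σ aₙ zⁿ` then `f' = Σ (n+1)aₙ₊₁ zⁿ`. -/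
noncomputable def dcoeff (a : ℕ → ℂ) : ℕ → ℂ := fun n => ((n : ℂ) + 1) * a (n + 1)

/-- Membership in `S² = {f holomorphic on D : f' ∈ H²}`. -/
def memS2 (a : ℕ → ℂ) : Prop := memH2 a ∧ memH2 (dcoeff a)

/-- The `S²` norm: `‖f‖²_{S²} = ‖f'‖²_{H²} + ‖f‖²_{H²}`. -/
noncomputable def s2norm (a : ℕ → ℂ) : ℝ :=
  Real.sqrt (h2norm (dcoeff a) ^ 2 + h2norm a ^ 2)

open Real

theorem Real.summable_mul_and_tsum_mul_le_sqrt_mul_sqrt {ι : Type*} {f g : ι → ℝ}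
    (hf : ∀ i, 0 ≤ f i) (hg : ∀ i, 0 ≤ g i)
    (hf₂ : Summable fun i => f i ^ 2) (hg₂ : Summable fun i => g i ^ 2) :
    (Summable fun i => f i * g i) ∧
      ∑' i, f i * g i ≤ √(∑' i, f i ^ 2) * √(∑' i, g i ^ 2) := by
  simp_rw [← Real.rpow_two] at hf₂ hg₂
  simpa only [Real.rpow_two, Real.sqrt_eq_rpow] using
    summable_and_inner_le_Lp_mul_Lq_tsum_of_nonneg HolderConjugate.two_two hf hg hf₂ hg₂

theorem norm_tsum_mul_pow_le_sqrt_mul_sqrt {𝕜 : Type*} [NormedDivisionRing 𝕜]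
    [CompleteSpace 𝕜] {a : ℕ → 𝕜} {w : ℕ → ℝ} (hw : ∀ n, 0 < w n)
    (ha : Summable fun n => w n * ‖a n‖ ^ 2) (hw' : Summable fun n => (w n)⁻¹)
    {z : 𝕜} (hz : ‖z‖ ≤ 1) :
    ‖∑' n, a n * z ^ n‖ ≤ √(∑' n, w n * ‖a n‖ ^ 2) * √(∑' n, (w n)⁻¹) := by
  set f : ℕ → ℝ := fun n => √(w n) * ‖a n‖
  set g : ℕ → ℝ := fun n => (√(w n))⁻¹
  have hf₂ : ∀ n, f n ^ 2 = w n * ‖a n‖ ^ 2 := fun n => by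
    rw [mul_pow, sq_sqrt (hw n).le]
  have hg₂ : ∀ n, g n ^ 2 = (w n)⁻¹ := fun n => by
    rw [inv_pow, sq_sqrt (hw n).le]
  have hterm : ∀ n, ‖a n * z ^ n‖ ≤ f n * g n := fun n => by
    have : √(w n) ≠ 0 := (sqrt_pos.2 (hw n)).ne'
    calc ‖a n * z ^ n‖ = ‖a n‖ * ‖z‖ ^ n := by rw [norm_mul, norm_pow]
      _ ≤ ‖a n‖ := mul_le_of_le_one_right (norm_nonneg _) (pow_le_one₀ (norm_nonneg z) hz)
      _ = f n * g n := by simp only [f, g]; field_simp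
  obtain ⟨hfg, hCS⟩ := Real.summable_mul_and_tsum_mul_le_sqrt_mul_sqrt (f := f) (g := g)
    (fun n => by positivity) (fun n => by positivity)
    (by simpa only [hf₂] using ha) (by simpa only [hg₂] using hw')
  have hnorm : Summable fun n => ‖a n * z ^ n‖ :=
    hfg.of_nonneg_of_le (fun n => norm_nonneg _) hterm
  calc ‖∑' n, a n * z ^ n‖ ≤ ∑' n, ‖a n * z ^ n‖ := norm_tsum_le_tsum_norm hnorm
    _ ≤ ∑' n, f n * g n := hnorm.tsum_le_tsum hterm hfg
    _ ≤ _ := by simpa only [hf₂, hg₂] using hCS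

theorem hasSum_one_div_nat_succ_sq :
    HasSum (fun n : ℕ => 1 / ((n : ℝ) + 1) ^ 2) (π ^ 2 / 6) := by
  simpa using (hasSum_nat_add_iff' 1).2 hasSum_zeta_two

theorem inv_one_add_sq_le_two_mul_one_div_add_one_sq {x : ℝ} (hx : x + 1 ≠ 0) :
    (1 + x ^ 2)⁻¹ ≤ 2 * (1 / (x + 1) ^ 2) := by
  rw [← div_eq_mul_one_div, inv_eq_one_div,
    div_le_div_iff₀ (by positivity) (pow_two_pos_of_ne_zero hx)]
  nlinarith [sq_nonneg (x - 1)]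

theorem summable_inv_one_add_sq :
    Summable fun n : ℕ => (1 + (n : ℝ) ^ 2)⁻¹ :=
  (hasSum_one_div_nat_succ_sq.mul_left 2).summable.of_nonneg_of_le (fun n => by positivity)
    fun n => inv_one_add_sq_le_two_mul_one_div_add_one_sq (by positivity)

theorem tsum_inv_one_add_sq_le_four : ∑' n : ℕ, (1 + (n : ℝ) ^ 2)⁻¹ ≤ 4 := by
  have hζ := hasSum_one_div_nat_succ_sq.mul_left 2
  calc ∑' n : ℕ, (1 + (n : ℝ) ^ 2)⁻¹ ≤ 2 * (π ^ 2 / 6) :=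
        summable_inv_one_add_sq.tsum_le_tsum
          (fun n => inv_one_add_sq_le_two_mul_one_div_add_one_sq (by positivity))
          hζ.summable |>.trans_eq hζ.tsum_eq
    _ ≤ 4 := by nlinarith [pi_lt_d2, pi_pos]

theorem memH2.hasSum_norm_sq {a : ℕ → ℂ} (h : memH2 a) :
    HasSum (fun n => ‖a n‖ ^ 2) (h2norm a ^ 2) := by
  rw [h2norm, sq_sqrt (tsum_nonneg fun n => sq_nonneg _)]
  exact h.hasSum

theorem hasSum_natCast_sq_mul_norm_sq {a : ℕ → ℂ} (h : memH2 (dcoeff a)) :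
    HasSum (fun n : ℕ => (n : ℝ) ^ 2 * ‖a n‖ ^ 2) (h2norm (dcoeff a) ^ 2) := by
  have hshift (n : ℕ) : ‖dcoeff a n‖ ^ 2 = ((n : ℝ) + 1) ^ 2 * ‖a (n + 1)‖ ^ 2 := by
    rw [dcoeff, norm_mul, mul_pow, ← Nat.cast_succ, Complex.norm_natCast, Nat.cast_succ]
  refine (hasSum_nat_add_iff' 1).1 ?_
  simpa [hshift] using h.hasSum_norm_sq

theorem memS2.hasSum_one_add_sq_mul_norm_sq {a : ℕ → ℂ} (h : memS2 a) :
    HasSum (fun n : ℕ => (1 + (n : ℝ) ^ 2) * ‖a n‖ ^ 2) (s2norm a ^ 2) := by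
  rw [s2norm, sq_sqrt (by positivity), add_comm]
  simpa only [add_mul, one_mul] using h.1.hasSum_norm_sq.add (hasSum_natCast_sq_mul_norm_sq h.2)

/-- The sup-norm bound `‖f‖_∞ ≤ 2‖f‖_{S²}` for `f ∈ S²`. -/
theorem S2_sup_norm_bound (a : ℕ → ℂ) (h : memS2 a) :
    ∀ z ∈ Metric.ball (0 : ℂ) 1, ‖∑' n, a n * z ^ n‖ ≤ 2 * s2norm a := by
  intro z hz
  have hs : 0 ≤ s2norm a := sqrt_nonneg _
  have ha := h.hasSum_one_add_sq_mul_norm_sq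
  calc ‖∑' n, a n * z ^ n‖
      ≤ √(∑' n : ℕ, (1 + (n : ℝ) ^ 2) * ‖a n‖ ^ 2) *
          √(∑' n : ℕ, (1 + (n : ℝ) ^ 2)⁻¹) :=
        norm_tsum_mul_pow_le_sqrt_mul_sqrt (fun n => by positivity) ha.summable
          summable_inv_one_add_sq (mem_ball_zero_iff.1 hz).le
    _ ≤ s2norm a * 2 := by
        rw [ha.tsum_eq, sqrt_sq hs]
        gcongr
        exact (sqrt_le_left zero_le_two).2 (by linarith [tsum_inv_one_add_sq_le_four])
    _ = 2 * s2norm a := mul_comm _ _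
end

section
/- S² = { f holomorphic on D : f' ∈ H² } is closed under pointwise multiplication, and for all f, g ∈ S², ‖fg‖_{S²} ≤ 4 ‖f‖_{S²} ‖g‖_{S²}. -/
open scoped BigOperators

/-- Cauchy product: Taylor coefficients of the pointwise product `f·g`. -/
noncomputable def mulCoeff (a b : ℕ → ℂ) : ℕ → ℂ :=
  fun n => ∑ k ∈ Finset.range (n + 1), a k * b (n - k)

/-!
Work with Taylor coefficients. A sequence in `S²` is absolutely summable with
`‖a‖₁ ≤ √3 ‖a‖_{S²}` (the coefficient form of the sup-norm bound): Cauchy–Schwarz gives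
`Σ |aₙ₊₁| = Σ (n+1)⁻¹ |(n+1) aₙ₊₁| ≤ √(π²/6) ‖f'‖_{H²}` and `π²/6 ≤ 2`. Young's inequality
`‖c * x‖₂ ≤ ‖c‖₁ ‖x‖₂` for the Cauchy product then gives `‖fg‖_{H²} ≤ √3 AB`, and the product rule
`(fg)' = f'g + fg'` with Minkowski gives `‖(fg)'‖_{H²} ≤ 2√3 AB`, so `‖fg‖²_{S²} ≤ 15 A²B²`.
The coefficient identities behind the product rule are transported from `ℂ⟦X⟧`.
-/

open PowerSeries

lemma mk_mulCoeff (a b : ℕ → ℂ) : mk (mulCoeff a b) = mk a * mk b := by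
  ext n
  rw [coeff_mk, coeff_mul, Finset.Nat.sum_antidiagonal_eq_sum_range_succ_mk]
  simp only [coeff_mk, mulCoeff]

lemma mk_dcoeff (a : ℕ → ℂ) : mk (dcoeff a) = d⁄dX ℂ (mk a) := by
  ext n
  rw [coeff_derivative, coeff_mk, coeff_mk, dcoeff, mul_comm]

lemma mk_injective : Function.Injective (mk : (ℕ → ℂ) → ℂ⟦X⟧) :=
  fun a b h => funext fun n => by simpa only [coeff_mk] using congrArg (coeff n) h

lemma mulCoeff_comm (a b : ℕ → ℂ) : mulCoeff a b = mulCoeff b a :=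
  mk_injective <| by rw [mk_mulCoeff, mk_mulCoeff, mul_comm]

lemma dcoeff_mulCoeff (a b : ℕ → ℂ) :
    dcoeff (mulCoeff a b) = mulCoeff (dcoeff a) b + mulCoeff a (dcoeff b) := by
  refine mk_injective ?_
  have mk_add : ∀ x y : ℕ → ℂ, mk (x + y) = mk x + mk y := fun x y => by ext; simp
  rw [mk_dcoeff, mk_mulCoeff, Derivation.leibniz, mk_add, mk_mulCoeff, mk_mulCoeff, mk_dcoeff,
    mk_dcoeff, smul_eq_mul, smul_eq_mul]
  ring

lemma h2norm_nonneg (a : ℕ → ℂ) : 0 ≤ h2norm a := Real.sqrt_nonneg _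

lemma s2norm_nonneg (a : ℕ → ℂ) : 0 ≤ s2norm a := Real.sqrt_nonneg _

lemma h2norm_sq (a : ℕ → ℂ) : h2norm a ^ 2 = ∑' n, ‖a n‖ ^ 2 :=
  Real.sq_sqrt (tsum_nonneg fun _ => sq_nonneg _)

lemma h2norm_le_iff {a : ℕ → ℂ} {C : ℝ} (hC : 0 ≤ C) :
    h2norm a ≤ C ↔ ∑' n, ‖a n‖ ^ 2 ≤ C ^ 2 := by
  rw [h2norm, Real.sqrt_le_iff, and_iff_right hC]

lemma s2norm_le_iff {a : ℕ → ℂ} {C : ℝ} (hC : 0 ≤ C) :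
    s2norm a ≤ C ↔ h2norm (dcoeff a) ^ 2 + h2norm a ^ 2 ≤ C ^ 2 := by
  rw [s2norm, Real.sqrt_le_iff, and_iff_right hC]

lemma h2norm_le_s2norm (a : ℕ → ℂ) : h2norm a ≤ s2norm a :=
  Real.le_sqrt_of_sq_le (le_add_of_nonneg_left (sq_nonneg _))

lemma h2norm_dcoeff_le_s2norm (a : ℕ → ℂ) : h2norm (dcoeff a) ≤ s2norm a :=
  Real.le_sqrt_of_sq_le (le_add_of_nonneg_right (sq_nonneg _))

lemma memℓp_two_iff_memH2 {a : ℕ → ℂ} : Memℓp a 2 ↔ memH2 a := by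
  rw [memℓp_gen_iff (by norm_num)]
  simp only [ENNReal.toReal_ofNat, Real.rpow_two]
  rfl

lemma h2norm_eq_norm_lp {a : ℕ → ℂ} (ha : memH2 a) :
    h2norm a = ‖(⟨a, memℓp_two_iff_memH2.2 ha⟩ : lp (fun _ : ℕ => ℂ) 2)‖ := by
  rw [lp.norm_eq_tsum_rpow (by norm_num), h2norm, Real.sqrt_eq_rpow]
  simp only [ENNReal.toReal_ofNat, Real.rpow_two, one_div]

theorem memH2_add_and_h2norm_add_le {x y : ℕ → ℂ} (hx : memH2 x) (hy : memH2 y) :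
    memH2 (x + y) ∧ h2norm (x + y) ≤ h2norm x + h2norm y := by
  let X : lp (fun _ : ℕ => ℂ) 2 := ⟨x, memℓp_two_iff_memH2.2 hx⟩
  let Y : lp (fun _ : ℕ => ℂ) 2 := ⟨y, memℓp_two_iff_memH2.2 hy⟩
  have hxy : memH2 (x + y) := memℓp_two_iff_memH2.1 (X + Y).2
  refine ⟨hxy, ?_⟩
  rw [h2norm_eq_norm_lp hx, h2norm_eq_norm_lp hy, h2norm_eq_norm_lp hxy]
  exact norm_add_le X Y

open Finset in
lemma sq_norm_mulCoeff_le {c : ℕ → ℂ} (hc : Summable fun n => ‖c n‖) (b : ℕ → ℂ) (n : ℕ) :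
    ‖mulCoeff c b n‖ ^ 2 ≤ (∑' k, ‖c k‖) * ∑ k ∈ range (n + 1), ‖c k‖ * ‖b (n - k)‖ ^ 2 :=
  calc ‖mulCoeff c b n‖ ^ 2 ≤ (∑ k ∈ range (n + 1), ‖c k‖ * ‖b (n - k)‖) ^ 2 := by
        gcongr
        exact (norm_sum_le _ _).trans_eq (by simp only [norm_mul])
    _ ≤ (∑ k ∈ range (n + 1), ‖c k‖) * ∑ k ∈ range (n + 1), ‖c k‖ * ‖b (n - k)‖ ^ 2 :=
        sum_sq_le_sum_mul_sum_of_sq_le_mul _ (fun _ _ => norm_nonneg _)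
          (fun _ _ => by positivity) (fun _ _ => le_of_eq (by ring))
    _ ≤ (∑' k, ‖c k‖) * ∑ k ∈ range (n + 1), ‖c k‖ * ‖b (n - k)‖ ^ 2 := by
        gcongr
        exact hc.sum_le_tsum _ fun _ _ => norm_nonneg _

theorem memH2_mulCoeff_and_h2norm_le {c b : ℕ → ℂ} (hc : Summable fun n => ‖c n‖)
    (hb : memH2 b) :
    memH2 (mulCoeff c b) ∧ h2norm (mulCoeff c b) ≤ (∑' n, ‖c n‖) * h2norm b := by
  set L := ∑' n, ‖c n‖
  have hprod : HasSum (fun n => ∑ k ∈ Finset.range (n + 1), ‖c k‖ * ‖b (n - k)‖ ^ 2)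
      (L * ∑' n, ‖b n‖ ^ 2) :=
    hasSum_sum_range_mul_of_summable_norm (f := fun k => ‖c k‖) (g := fun k => ‖b k‖ ^ 2)
      (by simpa only [norm_norm] using hc) (by simp only [norm_pow, norm_norm]; exact hb)
  have hdom := sq_norm_mulCoeff_le hc b
  have hsum : memH2 (mulCoeff c b) :=
    (hprod.summable.mul_left L).of_nonneg_of_le (fun _ => sq_nonneg _) hdom
  refine ⟨hsum, (h2norm_le_iff (mul_nonneg (tsum_nonneg fun _ => norm_nonneg _)
    (h2norm_nonneg b))).2 ?_⟩
  calc ∑' n, ‖mulCoeff c b n‖ ^ 2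
      ≤ ∑' n, L * ∑ k ∈ Finset.range (n + 1), ‖c k‖ * ‖b (n - k)‖ ^ 2 :=
        hsum.tsum_le_tsum hdom (hprod.summable.mul_left L)
    _ = (L * h2norm b) ^ 2 := by rw [tsum_mul_left, hprod.tsum_eq, mul_pow, h2norm_sq]; ring

theorem summable_mul_and_tsum_mul_le_sqrt {ι : Type*} {f g : ι → ℝ} (hf : ∀ i, 0 ≤ f i)
    (hg : ∀ i, 0 ≤ g i) (hf2 : Summable fun i => f i ^ 2) (hg2 : Summable fun i => g i ^ 2) :
    Summable (fun i => f i * g i) ∧ ∑' i, f i * g i ≤ √(∑' i, f i ^ 2) * √(∑' i, g i ^ 2) := by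
  obtain ⟨hsum, hle⟩ := Real.summable_and_inner_le_Lp_mul_Lq_tsum_of_nonneg
    Real.HolderConjugate.two_two hf hg (by simpa only [Real.rpow_two])
    (by simpa only [Real.rpow_two])
  refine ⟨hsum, ?_⟩
  rw [Real.sqrt_eq_rpow, Real.sqrt_eq_rpow]
  simpa only [Real.rpow_two] using hle

open Real in
lemma hasSum_inv_succ_sq : HasSum (fun n : ℕ => ((n : ℝ) + 1)⁻¹ ^ 2) (π ^ 2 / 6) := by
  simpa using (hasSum_nat_add_iff' 1).mpr hasSum_zeta_two

open Real in
lemma pi_sq_div_six_le_two : π ^ 2 / 6 ≤ 2 := by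
  nlinarith [pi_lt_d2, pi_pos]

lemma norm_succ_eq_inv_mul_norm_dcoeff (a : ℕ → ℂ) (n : ℕ) :
    ‖a (n + 1)‖ = ((n : ℝ) + 1)⁻¹ * ‖dcoeff a n‖ := by
  have hn : ‖(n : ℂ) + 1‖ = (n : ℝ) + 1 := by exact_mod_cast Complex.norm_natCast (n + 1)
  rw [dcoeff, norm_mul, hn, inv_mul_cancel_left₀ (by positivity)]

lemma h2norm_add_sqrt_two_mul_le (a : ℕ → ℂ) :
    h2norm a + √2 * h2norm (dcoeff a) ≤ √3 * s2norm a := by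
  have h2 : √2 ^ 2 = 2 := Real.sq_sqrt zero_le_two
  rw [s2norm, ← Real.sqrt_mul zero_le_three]
  refine Real.le_sqrt_of_sq_le ?_
  nlinarith [sq_nonneg (√2 * h2norm a - h2norm (dcoeff a))]

theorem summable_norm_and_tsum_norm_le_of_memS2 {a : ℕ → ℂ} (ha : memS2 a) :
    Summable (fun n => ‖a n‖) ∧ ∑' n, ‖a n‖ ≤ √3 * s2norm a := by
  obtain ⟨hsum, hle⟩ := summable_mul_and_tsum_mul_le_sqrt
    (fun _ => by positivity) (fun _ => norm_nonneg _) hasSum_inv_succ_sq.summable ha.2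
  simp only [← norm_succ_eq_inv_mul_norm_dcoeff] at hsum hle
  have hsa : Summable fun n => ‖a n‖ := (summable_nat_add_iff 1).1 hsum
  refine ⟨hsa, ?_⟩
  have h0 : ‖a 0‖ ≤ h2norm a :=
    Real.le_sqrt_of_sq_le (ha.1.le_tsum 0 fun _ _ => sq_nonneg _)
  have hw : √(∑' n : ℕ, ((n : ℝ) + 1)⁻¹ ^ 2) ≤ √2 :=
    Real.sqrt_le_sqrt (hasSum_inv_succ_sq.tsum_eq ▸ pi_sq_div_six_le_two)
  calc ∑' n, ‖a n‖ = ‖a 0‖ + ∑' n, ‖a (n + 1)‖ := hsa.tsum_eq_zero_add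
    _ ≤ h2norm a + √2 * h2norm (dcoeff a) :=
        add_le_add h0 (hle.trans (mul_le_mul_of_nonneg_right hw (h2norm_nonneg _)))
    _ ≤ √3 * s2norm a := h2norm_add_sqrt_two_mul_le a

theorem memH2_mulCoeff_and_h2norm_le_of_memS2 {c x : ℕ → ℂ} (hc : memS2 c) (hx : memH2 x) :
    memH2 (mulCoeff c x) ∧ h2norm (mulCoeff c x) ≤ √3 * s2norm c * h2norm x := by
  obtain ⟨hsum, hle⟩ := summable_norm_and_tsum_norm_le_of_memS2 hc
  obtain ⟨hmem, hmul⟩ := memH2_mulCoeff_and_h2norm_le hsum hx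
  exact ⟨hmem, hmul.trans (mul_le_mul_of_nonneg_right hle (h2norm_nonneg x))⟩

theorem memH2_dcoeff_mulCoeff_and_h2norm_le {a b : ℕ → ℂ} (ha : memS2 a) (hb : memS2 b) :
    memH2 (dcoeff (mulCoeff a b)) ∧
      h2norm (dcoeff (mulCoeff a b)) ≤ 2 * (√3 * s2norm a * s2norm b) := by
  obtain ⟨ha'b, ha'b_le⟩ := memH2_mulCoeff_and_h2norm_le_of_memS2 hb ha.2
  obtain ⟨hab', hab'_le⟩ := memH2_mulCoeff_and_h2norm_le_of_memS2 ha hb.2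
  rw [mulCoeff_comm b] at ha'b ha'b_le
  obtain ⟨hd, hd_le⟩ := memH2_add_and_h2norm_add_le ha'b hab'
  rw [← dcoeff_mulCoeff] at hd hd_le
  have hA := s2norm_nonneg a
  have hB := s2norm_nonneg b
  refine ⟨hd, hd_le.trans ?_⟩
  calc h2norm (mulCoeff (dcoeff a) b) + h2norm (mulCoeff a (dcoeff b))
      ≤ √3 * s2norm b * s2norm a + √3 * s2norm a * s2norm b :=
        add_le_add (ha'b_le.trans (by gcongr; exact h2norm_dcoeff_le_s2norm a))
          (hab'_le.trans (by gcongr; exact h2norm_dcoeff_le_s2norm b))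
    _ = 2 * (√3 * s2norm a * s2norm b) := by ring

/-- `S²` is closed under pointwise multiplication and `‖fg‖_{S²} ≤ 4‖f‖_{S²}‖g‖_{S²}`. -/
theorem S2_closed_under_multiplication (a b : ℕ → ℂ) (ha : memS2 a) (hb : memS2 b) :
    memS2 (mulCoeff a b) ∧ s2norm (mulCoeff a b) ≤ 4 * s2norm a * s2norm b := by
  have hA := s2norm_nonneg a
  have hB := s2norm_nonneg b
  obtain ⟨hab, hH⟩ := memH2_mulCoeff_and_h2norm_le_of_memS2 ha hb.1
  obtain ⟨hd, hD⟩ := memH2_dcoeff_mulCoeff_and_h2norm_le ha hb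
  replace hH : h2norm (mulCoeff a b) ≤ √3 * s2norm a * s2norm b :=
    hH.trans (by gcongr; exact h2norm_le_s2norm b)
  refine ⟨⟨hab, hd⟩, (s2norm_le_iff (by positivity)).2 ?_⟩
  have h3 : √3 ^ 2 = 3 := Real.sq_sqrt zero_le_three
  nlinarith [pow_le_pow_left₀ (h2norm_nonneg _) hD 2, pow_le_pow_left₀ (h2norm_nonneg _) hH 2]
end
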